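/- The square spiral trajectory S : ℕ → ℤ×ℤ (defined by S(0) = (0,0) and consecutive loops of 2p−1 steps North, 2p−1 steps West, 2p steps South, 2p steps East for p = 1, 2, ...) is surjective: every node of ℤ×ℤ is visited by the spiral at some round; i.e., for every v ∈ ℤ×ℤ there exists t ∈ ℕ with S(t) = v. -/

import Mathlib

/-!
Loop `p + 1` of the spiral starts at time `4p² + 2p` at the corner `(p, -p)`, goes north along
`x = p` up to `(p, p + 1)` and then along the top, left and bottom sides of the square
`[-(p+1), p+1]²` to the corner `(p + 1, -(p + 1))`, where the next loop starts. Every lattice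
point lies on the path of some loop: which loop, and at which step, is read off from whether it
lies in the right, top, left or bottom quarter of the plane.
-/

/-- Direction of global step `t` of the square spiral, where `p` means the agent
is currently in loop number `p+1` (loop `p+1` consists of `2p+1` steps North,
`2p+1` steps West, `2p+2` steps South, `2p+2` steps East, total `8p+6` steps). -/
def spiralDir (t p : ℕ) : ℤ × ℤ :=
  if h : t < 8 * p + 6 then
    if t < 2 * p + 1 then (0, 1)
    else if t < 4 * p + 2 then (-1, 0)
    else if t < 6 * p + 4 then (0, -1)
    else (1, 0)
  else spiralDir (t - (8 * p + 6)) (p + 1)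
termination_by t
decreasing_by omega

/-- The square spiral trajectory starting at the origin: position after `t` steps. -/
def spiral (t : ℕ) : ℤ × ℤ := ∑ i ∈ Finset.range t, spiralDir i 0

/-- The time at which loop `p + 1` starts: the first `p` loops take `∑_{k<p} (8k + 6)` steps. -/
def spiralLoopStart (p : ℕ) : ℕ := 4 * p ^ 2 + 2 * p

/-- The position after `s` steps of loop `p + 1`, for `s ≤ 8p + 6`. -/
def spiralLoopPos (p s : ℕ) : ℤ × ℤ :=
  if s ≤ 2 * p + 1 then ((p : ℤ), -(p : ℤ) + s)
  else if s ≤ 4 * p + 2 then ((p : ℤ) + (2 * p + 1) - s, (p : ℤ) + 1)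
  else if s ≤ 6 * p + 4 then (-(p : ℤ) - 1, (p : ℤ) + 1 + (4 * p + 2) - s)
  else (-(p : ℤ) - 1 + s - (6 * p + 4), -(p : ℤ) - 1)

lemma spiralDir_loopLength_add (q s : ℕ) : spiralDir (8 * q + 6 + s) q = spiralDir s (q + 1) := by
  rw [spiralDir, dif_neg (by omega), Nat.add_sub_cancel_left]

lemma spiralDir_add_of_loops (p q s : ℕ) :
    spiralDir (spiralLoopStart p + 8 * p * q + s) q = spiralDir s (p + q) := by
  induction p generalizing q with
  | zero => simp [spiralLoopStart]
  | succ p ih =>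
    have hsplit : spiralLoopStart (p + 1) + 8 * (p + 1) * q + s
        = 8 * q + 6 + (spiralLoopStart p + 8 * p * (q + 1) + s) := by
      simp only [spiralLoopStart]; ring
    rw [hsplit, spiralDir_loopLength_add, ih, ← add_assoc, Nat.add_right_comm]

lemma spiralDir_loopStart_add (p s : ℕ) : spiralDir (spiralLoopStart p + s) 0 = spiralDir s p := by
  simpa using spiralDir_add_of_loops p 0 s

lemma spiral_succ (t : ℕ) : spiral (t + 1) = spiral t + spiralDir t 0 :=
  Finset.sum_range_succ _ _

lemma spiralLoopPos_end (p : ℕ) : spiralLoopPos p (8 * p + 6) = spiralLoopPos (p + 1) 0 := by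
  simp only [spiralLoopPos]
  split_ifs <;> ext <;> push_cast <;> omega

lemma spiralLoopPos_succ {p s : ℕ} (hs : s < 8 * p + 6) :
    spiralLoopPos p (s + 1) = spiralLoopPos p s + spiralDir s p := by
  rw [spiralDir, dif_pos hs]
  simp only [spiralLoopPos]
  split_ifs <;> ext <;> simp only [Prod.fst_add, Prod.snd_add] <;> push_cast <;> omega

lemma spiral_loopStart_add_of_start {p : ℕ} (h0 : spiral (spiralLoopStart p) = spiralLoopPos p 0)
    {s : ℕ} (hs : s ≤ 8 * p + 6) : spiral (spiralLoopStart p + s) = spiralLoopPos p s := by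
  induction s with
  | zero => exact h0
  | succ s ih =>
    rw [← add_assoc, spiral_succ, ih (by omega), spiralDir_loopStart_add,
      spiralLoopPos_succ (by omega)]

lemma spiral_loopStart (p : ℕ) : spiral (spiralLoopStart p) = spiralLoopPos p 0 := by
  induction p with
  | zero => rfl
  | succ p ih =>
    have hstart : spiralLoopStart (p + 1) = spiralLoopStart p + (8 * p + 6) := by
      simp only [spiralLoopStart]; ring
    rw [hstart, spiral_loopStart_add_of_start ih le_rfl, spiralLoopPos_end]

lemma spiral_loopStart_add {p s : ℕ} (hs : s ≤ 8 * p + 6) :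
    spiral (spiralLoopStart p + s) = spiralLoopPos p s :=
  spiral_loopStart_add_of_start (spiral_loopStart p) hs

lemma exists_spiralLoopPos_eq (v : ℤ × ℤ) : ∃ p s, s ≤ 8 * p + 6 ∧ spiralLoopPos p s = v := by
  obtain ⟨x, y⟩ := v
  have hregion : (0 ≤ x ∧ -x ≤ y ∧ y ≤ x + 1) ∨ (1 ≤ y ∧ -y ≤ x ∧ x ≤ y - 1) ∨
      (x ≤ -1 ∧ x ≤ y ∧ y ≤ -x) ∨ (y ≤ -1 ∧ y ≤ x ∧ x ≤ -y) := by omega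
  rcases hregion with h | h | h | h <;>
  [refine ⟨x.toNat, (y + x).toNat, by omega, ?_⟩;
   refine ⟨(y - 1).toNat, 2 * (y - 1).toNat + 1 + (y - 1 - x).toNat, by omega, ?_⟩;
   refine ⟨(-x - 1).toNat, 4 * (-x - 1).toNat + 2 + (-x - y).toNat, by omega, ?_⟩;
   refine ⟨(-y - 1).toNat, 6 * (-y - 1).toNat + 4 + (x - y).toNat, by omega, ?_⟩] <;>
  · simp only [spiralLoopPos]
    split_ifs <;> ext <;> push_cast <;> omega

/-- The square spiral visits every node of the grid: it is surjective. -/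
theorem spiral_surjective : Function.Surjective spiral := by
  intro v
  obtain ⟨p, s, hs, hv⟩ := exists_spiralLoopPos_eq v
  exact ⟨spiralLoopStart p + s, (spiral_loopStart_add hs).trans hv⟩
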